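/- In the dynamic network creation game in which players' communication cost uses the temporal shortest distance, for every real atomic cost α with 0 < α < 2 and every number of players n ≥ 2, the communication temporal graph of every Nash equilibrium has temporal diameter at most 2, i.e., d_{𝒢[s]}(u, v) ≤ 2 for every ordered pair of vertices u, v. -/

import Mathlib

open scoped ENNReal BigOperators

/-- A temporal path from `u` to `v`, given as a list of steps `(next vertex, time label)`.
The labelling `lab` gives, for each (ordered) pair of vertices, the set of time labels of the
edge joining them (empty if there is no edge); it is symmetric for temporal graphs arising
from strategy profiles.  The conditions say that consecutive steps use time labels belonging
to the corresponding edge, that time labels strictly increase along the path, that no vertex is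
repeated, and that the path ends at `v`. -/
def IsTemporalPath {V : Type*} (lab : V → V → Set ℕ) (u v : V) (p : List (V × ℕ)) : Prop :=
  List.Chain (fun a b => b.2 ∈ lab a.1 b.1) (u, 0) p ∧
  List.Chain' (· < ·) (p.map Prod.snd) ∧
  (u :: p.map Prod.fst).Nodup ∧
  (u :: p.map Prod.fst).getLast (List.cons_ne_nil _ _) = v

/-- The temporal shortest distance from `u` to `v`: the least number of edges of a temporal
path from `u` to `v` (`0` if `u = v`, `⊤` if there is no temporal path). -/
noncomputable def temporalDist {V : Type*} (lab : V → V → Set ℕ) (u v : V) : ℕ∞ :=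
  sInf {n : ℕ∞ | ∃ p : List (V × ℕ), IsTemporalPath lab u v p ∧ (p.length : ℕ∞) = n}

/-- The labelling of the communication temporal graph `𝒢[s]` of a strategy profile `s`:
`t` is a label of the edge `uv` iff `(u, t) ∈ s v` or `(v, t) ∈ s u`. -/
def profLab {V : Type*} (s : V → Finset (V × ℕ)) : V → V → Set ℕ :=
  fun u v => {t | (u, t) ∈ s v ∨ (v, t) ∈ s u}

/-- The (finite) set of time labels of the edge `uv` in the communication temporal graph. -/
def labelFinset {V : Type*} [DecidableEq V] (s : V → Finset (V × ℕ)) (u v : V) : Finset ℕ :=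
  (((s v).filter (fun p => p.1 = u)).image Prod.snd) ∪
    (((s u).filter (fun p => p.1 = v)).image Prod.snd)

/-- The total number of time labels `∑ e ∈ E, |λ(e)|` of the communication temporal graph
(each unordered pair is counted once, whence the division by `2`). -/
def numLabels {V : Type*} [Fintype V] [DecidableEq V] (s : V → Finset (V × ℕ)) : ℕ :=
  (∑ u : V, ∑ v : V, if u = v then 0 else (labelFinset s u v).card) / 2

/-- The number of edges `|E|` of the communication temporal graph. -/
def numEdges {V : Type*} [Fintype V] [DecidableEq V] (s : V → Finset (V × ℕ)) : ℕ :=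
  ((Finset.univ : Finset (V × V)).filter
    (fun q => q.1 ≠ q.2 ∧ (labelFinset s q.1 q.2).Nonempty)).card / 2

/-- The social cost `c[s] = α·∑_{e ∈ E} |λ(e)| + ∑_{(u,v) ∈ V×V} d_{𝒢[s]}(u,v)`
of a strategy profile `s` for atomic cost `α`. -/
noncomputable def socialCost {V : Type*} [Fintype V] [DecidableEq V]
    (α : ℝ) (s : V → Finset (V × ℕ)) : ℝ≥0∞ :=
  ENNReal.ofReal α * (numLabels s : ℝ≥0∞) +
    ∑ u : V, ∑ v : V, (temporalDist (profLab s) u v : ℝ≥0∞)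

/-- The individual cost `c[s](v) = α·|s(v)| + ∑_{w ∈ V} d_{𝒢[s]}(v,w)` of player `v`. -/
noncomputable def indivCost {V : Type*} [Fintype V]
    (α : ℝ) (s : V → Finset (V × ℕ)) (v : V) : ℝ≥0∞ :=
  ENNReal.ofReal α * ((s v).card : ℝ≥0∞) +
    ∑ w : V, (temporalDist (profLab s) v w : ℝ≥0∞)

/-- A strategy profile is a Nash equilibrium if no player can strictly decrease its individual
cost by changing only its own strategy. -/
def IsNash {V : Type*} [Fintype V] [DecidableEq V] (α : ℝ) (s : V → Finset (V × ℕ)) : Prop :=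
  ∀ (v : V) (t : Finset (V × ℕ)),
    ¬ indivCost α (Function.update s v t) v < indivCost α s v

/-- The optimal social cost `c*(α, n)`: the minimum social cost over all strategy profiles
with `n` players and atomic cost `α`. -/
noncomputable def optCost (α : ℝ) (n : ℕ) : ℝ≥0∞ :=
  ⨅ s : Fin n → Finset (Fin n × ℕ), socialCost α s

/-- The price of anarchy `PoA(α, n)`: the maximum social cost of a Nash equilibrium with `n`
players and atomic cost `α`, divided by the optimal social cost `c*(α, n)`. -/
noncomputable def PoA (α : ℝ) (n : ℕ) : ℝ≥0∞ :=
  (⨆ s : {s : Fin n → Finset (Fin n × ℕ) // IsNash α s}, socialCost α s.1) / optCost α n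

/-- The price of stability `PoS(α, n)`: the minimum social cost of a Nash equilibrium with `n`
players and atomic cost `α`, divided by the optimal social cost `c*(α, n)`. -/
noncomputable def PoS (α : ℝ) (n : ℕ) : ℝ≥0∞ :=
  (⨅ s : {s : Fin n → Finset (Fin n × ℕ) // IsNash α s}, socialCost α s.1) / optCost α n


/-
If `d(u, v) ≥ 3`, player `u` can buy the single edge `uv`: its building cost rises by `α < 2`,
its distance to `v` drops to `1`, and an extra label never lengthens a temporal path, so its
cost falls by at least `d(u, v) - 1 - α > 0`. Cancelling requires `u`'s cost to be finite,
which holds at equilibrium because buying an edge to every player is a deviation of finite cost.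
-/

section TemporalDist

variable {V : Type*}

lemma temporalDist_self (lab : V → V → Set ℕ) (u : V) : temporalDist lab u u = 0 :=
  nonpos_iff_eq_zero.mp <|
    sInf_le ⟨[], ⟨List.IsChain.singleton _, List.isChain_nil, by simp, by simp⟩, by simp⟩

lemma temporalDist_le_one_of_mem {lab : V → V → Set ℕ} {u v : V} {t : ℕ} (ht : t ∈ lab u v) :
    temporalDist lab u v ≤ 1 := by
  rcases eq_or_ne u v with rfl | huv
  · simp [temporalDist_self]
  · exact sInf_le ⟨[(v, t)], ⟨List.IsChain.cons_cons ht (List.IsChain.singleton _),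
      List.isChain_singleton _, by simp [huv], by simp⟩, by simp⟩

lemma temporalDist_anti {lab lab' : V → V → Set ℕ} (h : ∀ x y, lab x y ⊆ lab' x y) (u v : V) :
    temporalDist lab' u v ≤ temporalDist lab u v := by
  apply sInf_le_sInf
  rintro m ⟨p, ⟨hlab, hinc, hnodup, hlast⟩, rfl⟩
  exact ⟨p, ⟨List.IsChain.imp (fun a b hb => h a.1 b.1 hb) hlab, hinc, hnodup, hlast⟩, rfl⟩

lemma indivCost_ne_top_of_forall_temporalDist_ne_top [Fintype V] (α : ℝ)
    {s : V → Finset (V × ℕ)} {u : V}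
    (h : ∀ w, temporalDist (profLab s) u w ≠ ⊤) : indivCost α s u ≠ ⊤ := by
  refine ENNReal.add_ne_top.mpr ⟨ENNReal.mul_ne_top ENNReal.ofReal_ne_top
    (ENNReal.natCast_ne_top _), ENNReal.sum_ne_top.mpr fun w _ => ?_⟩
  simpa using h w

end TemporalDist

section Deviation

variable {V : Type*} [DecidableEq V]

lemma profLab_subset_profLab_update {s : V → Finset (V × ℕ)} {u : V} {T : Finset (V × ℕ)}
    (hT : s u ⊆ T) (x y : V) : profLab s x y ⊆ profLab (Function.update s u T) x y := by
  have hsub : ∀ z, s z ⊆ Function.update s u T z := fun z => by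
    rcases eq_or_ne z u with rfl | hz
    · simpa using hT
    · simp [hz]
  rintro t (h | h)
  exacts [Or.inl (hsub y h), Or.inr (hsub x h)]

lemma mem_profLab_update_self (s : V → Finset (V × ℕ)) {u w : V} {t : ℕ} {T : Finset (V × ℕ)}
    (hT : (w, t) ∈ T) : t ∈ profLab (Function.update s u T) u w :=
  Or.inr (by simpa using hT)

variable [Fintype V]

lemma indivCost_update_insert_add_le (α : ℝ) (s : V → Finset (V × ℕ)) (u v : V) (t : ℕ) :
    indivCost α (Function.update s u (insert (v, t) (s u))) u +
        (temporalDist (profLab s) u v : ℝ≥0∞) ≤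
      indivCost α s u + (ENNReal.ofReal α + 1) := by
  set s' := Function.update s u (insert (v, t) (s u))
  set A := ENNReal.ofReal α
  set d := fun (lab : V → V → Set ℕ) w => (temporalDist lab u w : ℝ≥0∞)
  set rest := ∑ w ∈ Finset.univ.erase v, d (profLab s) w
  have hcard : ((s' u).card : ℝ≥0∞) ≤ (s u).card + 1 := by
    simpa [s'] using (Nat.cast_le (α := ℝ≥0∞)).mpr (Finset.card_insert_le (v, t) (s u))
  have hdv : d (profLab s') v ≤ 1 := by
    simpa [d] using ENat.toENNReal_le.mpr <| temporalDist_le_one_of_mem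
      (mem_profLab_update_self s (u := u) (Finset.mem_insert_self (v, t) (s u)))
  have hrest : ∑ w ∈ Finset.univ.erase v, d (profLab s') w ≤ rest :=
    Finset.sum_le_sum fun w _ => ENat.toENNReal_le.mpr <|
      temporalDist_anti (profLab_subset_profLab_update (Finset.subset_insert _ _)) u w
  calc indivCost α s' u + d (profLab s) v
      = A * (s' u).card + (d (profLab s') v + ∑ w ∈ Finset.univ.erase v, d (profLab s') w) +
          d (profLab s) v := by
        rw [indivCost, ← Finset.add_sum_erase _ _ (Finset.mem_univ v)]
    _ ≤ A * ((s u).card + 1) + (1 + rest) + d (profLab s) v := by gcongr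
    _ = A * (s u).card + (d (profLab s) v + rest) + (A + 1) := by ring
    _ = indivCost α s u + (A + 1) := by
        rw [indivCost, ← Finset.add_sum_erase _ _ (Finset.mem_univ v)]

lemma IsNash.indivCost_ne_top {α : ℝ} {s : V → Finset (V × ℕ)} (hs : IsNash α s) (u : V) :
    indivCost α s u ≠ ⊤ := by
  set star : Finset (V × ℕ) := Finset.univ.image fun w => (w, 0)
  have hstar : indivCost α (Function.update s u star) u ≠ ⊤ :=
    indivCost_ne_top_of_forall_temporalDist_ne_top α fun w =>
      ne_top_of_le_ne_top ENat.one_ne_top <| temporalDist_le_one_of_mem <|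
        mem_profLab_update_self s (Finset.mem_image_of_mem _ (Finset.mem_univ w))
  exact ne_top_of_le_ne_top hstar (not_lt.mp (hs u star))

end Deviation

theorem statement_10_general (α : ℝ) (hα2 : α < 2) (n : ℕ)
    (s : Fin n → Finset (Fin n × ℕ)) (hs : IsNash α s) :
    ∀ u v : Fin n, temporalDist (profLab s) u v ≤ 2 := by
  intro u v
  have hdev := indivCost_update_insert_add_le α s u v 0
  have hstable := not_lt.mp (hs u (insert (v, 0) (s u)))
  have hd : (temporalDist (profLab s) u v : ℝ≥0∞) ≤ ENNReal.ofReal α + 1 :=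
    ENNReal.le_of_add_le_add_left (hs.indivCost_ne_top u)
      ((add_le_add_left hstable _).trans hdev)
  have hα : ENNReal.ofReal α + 1 < 3 := by
    have : ENNReal.ofReal α < 2 := by
      simpa using (ENNReal.ofReal_lt_ofReal_iff two_pos).mpr hα2
    simpa [two_add_one_eq_three] using ENNReal.add_lt_add_right ENNReal.one_ne_top this
  have : temporalDist (profLab s) u v < 3 := by exact_mod_cast hd.trans_lt hα
  exact Order.le_of_lt_add_one this

/-- For every atomic cost `0 < α < 2` and every number of players `n ≥ 2`, the communication
temporal graph of every Nash equilibrium has temporal diameter at most `2`. -/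
theorem statement_10 (α : ℝ) (hα0 : 0 < α) (hα2 : α < 2) (n : ℕ) (hn : 2 ≤ n)
    (s : Fin n → Finset (Fin n × ℕ)) (hs : IsNash α s) :
    ∀ u v : Fin n, temporalDist (profLab s) u v ≤ 2 :=
  statement_10_general α hα2 n s hs
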